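/- The minimal cardinality of a generating set of a finite group G equals the minimal length ℓ of a chain of subgroups {e} = H_0 < H_1 < ... < H_ℓ = G such that φ(H_i, H_{i+1}) ≠ 0 for all i, where φ(H,K) := ∑_{L ∈ [H,K]} μ(L,K)·|L:H|. -/

import Mathlib

/-!
Möbius inversion over the interval `[H, K]` turns `|H| · φ(H, K)` into the number of `g ∈ G`
with `⟨H, g⟩ = K`: since `|L| = |H| · |L : H|` counts the `g` with `⟨H, g⟩ ≤ L`, summing against
`μ(L, K)` leaves exactly those `g` for which the smallest such `L` is `K`. So `φ(Hᵢ, Hᵢ₊₁) ≠ 0`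
says that each step of the chain adjoins a single element. Adjoining the elements of a generating
set one at a time, skipping redundant ones, gives such a chain of length at most its size; the
elements adjoined along a strict chain are distinct and generate its top.
-/

open scoped Classical
open Finset

section Mobius

variable {α : Type*} [PartialOrder α] [Fintype α]

theorem sum_mobius_Icc_eq_ite (μ : α → α → ℤ) (hμ_self : ∀ a, μ a a = 1)
    (hμ_lt : ∀ a b, a < b → μ a b = -∑ c ∈ univ.filter (fun c => a < c ∧ c ≤ b), μ c b)
    (a b : α) :
    ∑ c ∈ univ.filter (fun c => a ≤ c ∧ c ≤ b), μ c b = if a = b then 1 else 0 := by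
  by_cases hab : a ≤ b
  · rcases hab.eq_or_lt with rfl | hlt
    · have : univ.filter (fun c => a ≤ c ∧ c ≤ a) = {a} := by
        ext c; simp [le_antisymm_iff, and_comm]
      simp [this, hμ_self]
    · have : univ.filter (fun c => a ≤ c ∧ c ≤ b) =
          insert a (univ.filter (fun c => a < c ∧ c ≤ b)) := by
        ext c
        simp only [mem_filter, mem_univ, true_and, mem_insert, le_iff_eq_or_lt (a := a)]
        aesop
      rw [this, sum_insert (by simp), hμ_lt a b hlt, if_neg hlt.ne]
      ring
  · rw [if_neg (fun h => hab h.le), sum_eq_zero]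
    intro c hc
    simp only [mem_filter] at hc
    exact absurd (hc.2.1.trans hc.2.2) hab

end Mobius

theorem Nat.sInf_eq_sInf_of_forall_exists_le {A B : Set ℕ} (hA : ∀ a ∈ A, ∃ b ∈ B, b ≤ a)
    (hB : ∀ b ∈ B, ∃ a ∈ A, a ≤ b) : sInf A = sInf B := by
  rcases B.eq_empty_or_nonempty with rfl | hB'
  · have : A = ∅ := Set.eq_empty_of_forall_notMem fun a ha => by simpa using hA a ha
    rw [this]
  obtain ⟨a, ha, hab⟩ := hB _ (Nat.sInf_mem hB')
  obtain ⟨b, hb, hba⟩ := hA _ (Nat.sInf_mem ⟨a, ha⟩)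
  exact le_antisymm ((Nat.sInf_le ha).trans hab) ((Nat.sInf_le hb).trans hba)

namespace Subgroup

variable {G : Type*} [Group G]

theorem closure_insert_closure (g : G) (s : Set G) :
    closure (insert g (closure s : Set G)) = closure (insert g s) := by
  simp only [Set.insert_eq, closure_union, closure_eq]

theorem closure_insert_le_iff {H L : Subgroup G} (hHL : H ≤ L) (g : G) :
    closure (insert g (H : Set G)) ≤ L ↔ g ∈ L := by
  simp [closure_le, Set.insert_subset_iff, hHL]

theorem le_closure_insert (g : G) (H : Subgroup G) : H ≤ closure (insert g (H : Set G)) :=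
  fun _ hx => subset_closure (Set.mem_insert_of_mem _ hx)

theorem lt_closure_insert_iff {g : G} {H : Subgroup G} :
    H < closure (insert g (H : Set G)) ↔ g ∉ H := by
  rw [(le_closure_insert g H).lt_iff_ne, ne_comm, Ne, not_iff_not]
  refine ⟨fun h => h ▸ subset_closure (Set.mem_insert g _), fun hg => ?_⟩
  rw [Set.insert_eq_of_mem hg, closure_eq]

theorem card_mul_relIndex {H L : Subgroup G} (h : H ≤ L) :
    Nat.card H * H.relIndex L = Nat.card L := by
  simpa [relIndex_bot_left] using relIndex_mul_relIndex (⊥ : Subgroup G) H L bot_le h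

def HasAdjoinChain (ℓ : ℕ) (K : Subgroup G) : Prop :=
  ∃ H : Fin (ℓ + 1) → Subgroup G, H 0 = ⊥ ∧ H (Fin.last ℓ) = K ∧
    (∀ i : Fin ℓ, H i.castSucc < H i.succ) ∧
    ∀ i : Fin ℓ, ∃ g : G, closure (insert g (H i.castSucc : Set G)) = H i.succ

theorem hasAdjoinChain_zero_iff {K : Subgroup G} : HasAdjoinChain 0 K ↔ K = ⊥ := by
  constructor
  · rintro ⟨H, h0, hK, -⟩
    exact hK.symm.trans h0
  · rintro rfl
    exact ⟨fun _ => ⊥, rfl, rfl, finZeroElim, finZeroElim⟩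

theorem hasAdjoinChain_succ_iff {ℓ : ℕ} {K : Subgroup G} :
    HasAdjoinChain (ℓ + 1) K ↔ ∃ K' g, HasAdjoinChain ℓ K' ∧ K' < K ∧
      closure (insert g (K' : Set G)) = K := by
  constructor
  · rintro ⟨H, h0, hK, hlt, hgen⟩
    obtain ⟨g, hg⟩ := hgen (Fin.last ℓ)
    refine ⟨H (Fin.last ℓ).castSucc, g, ⟨fun i => H i.castSucc, h0, rfl, fun i => ?_, fun i => ?_⟩,
      ?_, ?_⟩
    · simpa only [Fin.succ_castSucc] using hlt i.castSucc
    · simpa only [Fin.succ_castSucc] using hgen i.castSucc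
    · simpa only [Fin.succ_last, hK] using hlt (Fin.last ℓ)
    · simpa only [Fin.succ_last, hK] using hg
  · rintro ⟨K', g, ⟨H, h0, hK', hlt, hgen⟩, hK'K, hg⟩
    refine ⟨Fin.snoc H K, ?_, Fin.snoc_last _ _, Fin.lastCases ?_ fun i => ?_,
      Fin.lastCases ⟨g, ?_⟩ fun i => ?_⟩
    · simpa only [← Fin.castSucc_zero, Fin.snoc_castSucc] using h0
    · simpa only [Fin.succ_last, Fin.snoc_castSucc, Fin.snoc_last, hK'] using hK'K
    · simpa only [Fin.succ_castSucc, Fin.snoc_castSucc] using hlt i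
    · simpa only [Fin.succ_last, Fin.snoc_castSucc, Fin.snoc_last, hK'] using hg
    · simpa only [Fin.succ_castSucc, Fin.snoc_castSucc] using hgen i

theorem exists_hasAdjoinChain_closure (S : Finset G) :
    ∃ ℓ ≤ #S, HasAdjoinChain ℓ (closure (S : Set G)) := by
  induction S using Finset.induction_on with
  | empty => exact ⟨0, le_rfl, by simpa using hasAdjoinChain_zero_iff.2 rfl⟩
  | @insert a S ha ih =>
    obtain ⟨ℓ, hℓ, hS⟩ := ih
    rw [coe_insert, ← closure_insert_closure]
    by_cases haS : a ∈ closure (S : Set G)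
    · refine ⟨ℓ, hℓ.trans (card_le_card (subset_insert a S)), ?_⟩
      rwa [Set.insert_eq_of_mem haS, closure_eq]
    · exact ⟨ℓ + 1, by rw [card_insert_of_notMem ha]; omega,
        hasAdjoinChain_succ_iff.2 ⟨_, a, hS, lt_closure_insert_iff.2 haS, rfl⟩⟩

theorem HasAdjoinChain.exists_finset {ℓ : ℕ} {K : Subgroup G} (h : HasAdjoinChain ℓ K) :
    ∃ S : Finset G, #S = ℓ ∧ closure (S : Set G) = K := by
  induction ℓ generalizing K with
  | zero => exact ⟨∅, rfl, by simp [hasAdjoinChain_zero_iff.1 h]⟩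
  | succ ℓ ih =>
    obtain ⟨K', g, hK', hlt, rfl⟩ := hasAdjoinChain_succ_iff.1 h
    obtain ⟨S, rfl, rfl⟩ := ih hK'
    have hg := lt_closure_insert_iff.1 hlt
    refine ⟨insert g S, card_insert_of_notMem fun h => hg (subset_closure h), ?_⟩
    rw [coe_insert, closure_insert_closure]

section Finite

variable [Fintype G]

noncomputable def intervalTotient (μ : Subgroup G → Subgroup G → ℤ) (H K : Subgroup G) : ℤ :=
  ∑ L ∈ univ.filter (fun L => H ≤ L ∧ L ≤ K), μ L K * (H.relIndex L : ℤ)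

theorem card_mul_intervalTotient (μ : Subgroup G → Subgroup G → ℤ)
    (hμ_self : ∀ K : Subgroup G, μ K K = 1)
    (hμ_lt : ∀ K K' : Subgroup G, K < K' →
      μ K K' = -∑ L ∈ univ.filter (fun L : Subgroup G => K < L ∧ L ≤ K'), μ L K')
    (H K : Subgroup G) :
    Nat.card H * intervalTotient μ H K =
      #(univ.filter fun g => closure (insert g (H : Set G)) = K) := by
  calc (Nat.card H : ℤ) * intervalTotient μ H K
      = ∑ L ∈ univ.filter (fun L => H ≤ L ∧ L ≤ K),
          μ L K * #(univ.filter fun g => closure (insert g (H : Set G)) ≤ L) := by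
        rw [intervalTotient, mul_sum]
        refine sum_congr rfl fun L hL => ?_
        have hHL := (mem_filter.1 hL).2.1
        rw [filter_congr fun g _ => closure_insert_le_iff hHL g, ← Fintype.card_subtype,
          ← Nat.card_eq_fintype_card, ← card_mul_relIndex hHL]
        push_cast; ring
    _ = ∑ g, ∑ L ∈ univ.filter (fun L => closure (insert g (H : Set G)) ≤ L ∧ L ≤ K), μ L K := by
        simp only [card_filter, Nat.cast_sum, Nat.cast_ite, Nat.cast_one, Nat.cast_zero, mul_sum,
          mul_ite, mul_one, mul_zero]
        rw [sum_comm]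
        refine sum_congr rfl fun g _ => ?_
        rw [← sum_filter, filter_filter]
        refine sum_congr (filter_congr fun L _ => ?_) fun _ _ => rfl
        constructor
        · rintro ⟨⟨-, hLK⟩, hL⟩; exact ⟨hL, hLK⟩
        · rintro ⟨hL, hLK⟩; exact ⟨⟨(le_closure_insert g H).trans hL, hLK⟩, hL⟩
    _ = #(univ.filter fun g => closure (insert g (H : Set G)) = K) := by
        simp only [sum_mobius_Icc_eq_ite μ hμ_self hμ_lt, card_filter, Nat.cast_sum, Nat.cast_ite,
          Nat.cast_one, Nat.cast_zero]

theorem intervalTotient_ne_zero_iff (μ : Subgroup G → Subgroup G → ℤ)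
    (hμ_self : ∀ K : Subgroup G, μ K K = 1)
    (hμ_lt : ∀ K K' : Subgroup G, K < K' →
      μ K K' = -∑ L ∈ univ.filter (fun L : Subgroup G => K < L ∧ L ≤ K'), μ L K')
    (H K : Subgroup G) :
    intervalTotient μ H K ≠ 0 ↔ ∃ g : G, closure (insert g (H : Set G)) = K := by
  have h := card_mul_intervalTotient μ hμ_self hμ_lt H K
  rw [← mul_ne_zero_iff_left (Nat.cast_ne_zero.2 (Nat.card_pos (α := H)).ne'), h,
    Nat.cast_ne_zero, ← pos_iff_ne_zero, card_pos, filter_nonempty_iff]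
  simp

end Finite

end Subgroup

open scoped Classical in
/-- The minimal cardinality of a generating set of a finite group `G` equals the
minimal length `ℓ` of a chain of subgroups `1 = H₀ < H₁ < ... < H_ℓ = G` with
`φ(Hᵢ, Hᵢ₊₁) ≠ 0` for all `i`, where `φ(H,K) = ∑_{L ∈ [H,K]} μ(L,K)·|L:H|`. -/
theorem stmt8 {G : Type*} [Group G] [Fintype G]
    (μ : Subgroup G → Subgroup G → ℤ)
    (hμ_self : ∀ K : Subgroup G, μ K K = 1)
    (hμ_lt : ∀ K K' : Subgroup G, K < K' →
      μ K K' = -∑ L ∈ Finset.univ.filter (fun L : Subgroup G => K < L ∧ L ≤ K'), μ L K') :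
    sInf {n : ℕ | ∃ S : Finset G, S.card = n ∧ Subgroup.closure (S : Set G) = ⊤} =
    sInf {ℓ : ℕ | ∃ H : Fin (ℓ + 1) → Subgroup G,
      H 0 = ⊥ ∧ H (Fin.last ℓ) = ⊤ ∧
      (∀ i : Fin ℓ, H i.castSucc < H i.succ) ∧
      (∀ i : Fin ℓ,
        (∑ K ∈ Finset.univ.filter
            (fun K : Subgroup G => H i.castSucc ≤ K ∧ K ≤ H i.succ),
          μ K (H i.succ) * ((H i.castSucc).relIndex K : ℤ)) ≠ 0)} := by
  convert Nat.sInf_eq_sInf_of_forall_exists_le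
    (B := {ℓ | Subgroup.HasAdjoinChain ℓ (⊤ : Subgroup G)}) ?_ ?_ using 2
  · ext ℓ
    simp only [Set.mem_ofPred_eq, Subgroup.HasAdjoinChain,
      ← Subgroup.intervalTotient_ne_zero_iff μ hμ_self hμ_lt]
    rfl
  · rintro _ ⟨S, rfl, hS⟩
    obtain ⟨ℓ, hℓ, h⟩ := Subgroup.exists_hasAdjoinChain_closure S
    exact ⟨ℓ, hS ▸ h, hℓ⟩
  · intro ℓ hℓ
    obtain ⟨S, hS, hS'⟩ := Subgroup.HasAdjoinChain.exists_finset hℓ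
    exact ⟨_, ⟨S, rfl, hS'⟩, hS.le⟩
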